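/- arXiv:1804.11003 — 6 statements merged into one kernel-verified Lean document; each statement's English description precedes it below -/
import Mathlib

section
/- Let f : ℝⁿ → ℝ be locally Lipschitz and let D ⊆ ℝⁿ be a set of full Lebesgue measure on which f is differentiable. Define the Clarke subdifferential ∂̄f(x) as the convex hull of all limits lim_j ∇f(yʲ) over sequences yʲ → x with f differentiable at each yʲ. Then for every x and every ε > 0, ∂̄f(x) ⊆ closure(convexHull(∇f(B(x,ε) ∩ D))). -/
/-!
Separate a point `v ∉ closure (convexHull ℝ (∇f '' (B(x,ε) ∩ D)))` from that closed convex set by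
`⟪·, d⟫ < u`. Since `D` has full measure, `∂_d f ≤ u` almost everywhere on the open ball around `x`.
For a Lipschitz function such an a.e. bound holds at every point of differentiability: averaging
`f` over a small ball gives a differentiable function whose derivative is, by Rademacher's theorem,
the average of `Df`, so its slope along `d` is `≤ u`, and which is uniformly close to `f`; the mean
value inequality on segments therefore passes to `f`, and with it to the one-sided difference
quotients. Hence `⟪∇f(yⱼ), d⟫ ≤ u` for `yⱼ` close to `x`, and in the limit `⟪v, d⟫ ≤ u`.
-/

open Filter MeasureTheory

/-- The Clarke subdifferential of `f` at `x`: the convex hull of all limits of gradients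
along sequences of differentiability points converging to `x`. -/
noncomputable def clarkeSubdiff {n : ℕ} (f : EuclideanSpace ℝ (Fin n) → ℝ)
    (x : EuclideanSpace ℝ (Fin n)) : Set (EuclideanSpace ℝ (Fin n)) :=
  convexHull ℝ { v | ∃ y : ℕ → EuclideanSpace ℝ (Fin n),
    Tendsto y atTop (nhds x) ∧ (∀ j, DifferentiableAt ℝ f (y j)) ∧
    Tendsto (fun j => gradient f (y j)) atTop (nhds v) }

open Metric Set ProbabilityTheory
open scoped Topology NNReal

theorem MeasureTheory.Measure.AbsolutelyContinuous.ae_const_add_of_ae {G : Type*}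
    [MeasurableSpace G] [Add G] [MeasurableAdd G] {μ ν : Measure G} [μ.IsAddLeftInvariant]
    (hνμ : ν ≪ μ) {p : G → Prop} (hp : ∀ᵐ x ∂μ, p x) (z : G) : ∀ᵐ w ∂ν, p (z + w) :=
  hνμ.ae_le ((measurePreserving_add_left μ z).quasiMeasurePreserving.ae hp)

theorem LipschitzWith.dist_comp_add_le {E : Type*} [SeminormedAddCommGroup E] {g : E → ℝ}
    {K : ℝ≥0} (hg : LipschitzWith K g) (z w : E) : dist (g (z + w)) (g z) ≤ K * ‖w‖ := by
  simpa using hg.dist_le_mul (z + w) z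

section Mollification

variable {E : Type*} [NormedAddCommGroup E] [MeasurableSpace E] [BorelSpace E]
  {g : E → ℝ} {K : ℝ≥0} {ν : Measure E} {δ : ℝ}

namespace LipschitzWith

theorem integrable_comp_add [IsFiniteMeasure ν] (hg : LipschitzWith K g)
    (hν : ∀ᵐ w ∂ν, ‖w‖ ≤ δ) (z : E) : Integrable (fun w => g (z + w)) ν := by
  refine .of_bound (hg.continuous.comp (continuous_const_add z)).aestronglyMeasurable
    (|g z| + K * δ) (hν.mono fun w hw => ?_)
  have h := hg.dist_comp_add_le z w
  rw [Real.dist_eq] at h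
  rw [Real.norm_eq_abs]
  linarith [abs_sub_abs_le_abs_sub (g (z + w)) (g z), mul_le_mul_of_nonneg_left hw K.coe_nonneg]

theorem abs_integral_comp_add_sub_le [IsProbabilityMeasure ν] (hg : LipschitzWith K g)
    (hν : ∀ᵐ w ∂ν, ‖w‖ ≤ δ) (z : E) : |∫ w, g (z + w) ∂ν - g z| ≤ K * δ := by
  have hsub : ∫ w, g (z + w) ∂ν - g z = ∫ w, (g (z + w) - g z) ∂ν := by
    rw [integral_sub (hg.integrable_comp_add hν z) (integrable_const _)]
    simp
  rw [hsub, ← Real.norm_eq_abs]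
  refine (norm_integral_le_of_norm_le_const (C := K * δ) (hν.mono fun w hw => ?_)).trans
    (by simp)
  rw [← dist_eq_norm]
  exact (hg.dist_comp_add_le z w).trans (by gcongr)

variable [NormedSpace ℝ E] [FiniteDimensional ℝ E] {μ : Measure E} [μ.IsAddHaarMeasure]

theorem hasFDerivAt_integral_comp_add [IsFiniteMeasure ν] (hg : LipschitzWith K g)
    (hνμ : ν ≪ μ) (hν : ∀ᵐ w ∂ν, ‖w‖ ≤ δ) (z : E) :
    HasFDerivAt (fun z => ∫ w, g (z + w) ∂ν) (∫ w, fderiv ℝ g (z + w) ∂ν) z := by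
  refine (hasFDerivAt_integral_of_dominated_loc_of_lip (s := univ) (bound := fun _ => (K : ℝ))
    univ_mem (.of_forall fun z => (hg.continuous.comp (continuous_const_add z)).aestronglyMeasurable)
    (hg.integrable_comp_add hν z)
    ((measurable_fderiv ℝ g).comp (measurable_const_add z)).aestronglyMeasurable
    (.of_forall fun w => ?_) (integrable_const _) ?_).2
  · intro a _ b _
    simpa [edist_add_right] using hg (a + w) (b + w)
  · filter_upwards [hνμ.ae_const_add_of_ae hg.ae_differentiableAt z] with w hw
    exact (hasFDerivAt_comp_add_right w).2 hw.hasFDerivAt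

theorem integral_fderiv_comp_add_apply_le [IsProbabilityMeasure ν] (hg : LipschitzWith K g)
    (hνμ : ν ≪ μ) (hν : ∀ᵐ w ∂ν, ‖w‖ ≤ δ) {z d : E} {c : ℝ} {U : Set E}
    (hU : closedBall z δ ⊆ U) (hc : ∀ᵐ x ∂μ, x ∈ U → fderiv ℝ g x d ≤ c) :
    (∫ w, fderiv ℝ g (z + w) ∂ν) d ≤ c := by
  have hint : Integrable (fun w => fderiv ℝ g (z + w)) ν :=
    .of_bound ((measurable_fderiv ℝ g).comp (measurable_const_add z)).aestronglyMeasurable K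
      (.of_forall fun _ => norm_fderiv_le_of_lipschitz ℝ hg)
  rw [ContinuousLinearMap.integral_apply hint]
  refine (integral_mono_ae ((ContinuousLinearMap.apply ℝ ℝ d).integrable_comp hint)
    (integrable_const c) ?_).trans (by simp)
  filter_upwards [hνμ.ae_const_add_of_ae hc z, hν] with w hw hwδ
  exact hw (hU (by simpa using hwδ))

theorem sub_le_mul_add_of_ae_fderiv_apply_le (hg : LipschitzWith K g) {y d : E} {r c t : ℝ}
    (hc : ∀ᵐ x ∂μ, x ∈ ball y r → fderiv ℝ g x d ≤ c) (ht : 0 ≤ t) (hδ : 0 < δ)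
    (hδr : δ < r - t * ‖d‖) : g (y + t • d) - g y ≤ c * t + 2 * K * δ := by
  have : IsProbabilityMeasure μ[|closedBall 0 δ] := cond_isProbabilityMeasure_of_finite
    (measure_closedBall_pos μ 0 hδ).ne' measure_closedBall_lt_top.ne
  have hν : ∀ᵐ w ∂μ[|closedBall 0 δ], ‖w‖ ≤ δ :=
    (ae_cond_mem measurableSet_closedBall).mono fun w hw => mem_closedBall_zero_iff.1 hw
  have hderiv (s : ℝ) : HasDerivAt (fun s => ∫ w, g (y + s • d + w) ∂μ[|closedBall 0 δ])
      ((∫ w, fderiv ℝ g (y + s • d + w) ∂μ[|closedBall 0 δ]) d) s :=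
    (hg.hasFDerivAt_integral_comp_add cond_absolutelyContinuous hν _).comp_hasDerivAt s
      (by simpa using ((hasDerivAt_id s).smul_const d).const_add y)
  have hball {s : ℝ} (hs : s ∈ Ioo 0 t) : closedBall (y + s • d) δ ⊆ ball y r := fun x hx =>
    calc dist x y ≤ dist x (y + s • d) + dist (y + s • d) y := dist_triangle _ _ _
      _ ≤ δ + s * ‖d‖ := by
        gcongr
        · exact mem_closedBall.1 hx
        · simp [norm_smul, abs_of_pos hs.1]
      _ < r := by nlinarith [hs.2, norm_nonneg d]
  have hsegment := (convex_Icc 0 t).image_sub_le_mul_sub_of_deriv_le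
    (fun s _ => (hderiv s).continuousAt.continuousWithinAt)
    (fun s _ => (hderiv s).differentiableAt.differentiableWithinAt)
    (fun s hs => by
      rw [interior_Icc] at hs
      rw [(hderiv s).deriv]
      exact hg.integral_fderiv_comp_add_apply_le cond_absolutelyContinuous hν (hball hs) hc)
    0 (left_mem_Icc.2 ht) t (right_mem_Icc.2 ht) ht
  have h₀ := abs_le.1 (hg.abs_integral_comp_add_sub_le hν y)
  have h₁ := abs_le.1 (hg.abs_integral_comp_add_sub_le hν (y + t • d))
  simp only [zero_smul, add_zero, sub_zero] at hsegment
  linarith [h₀.1, h₁.2]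

theorem sub_le_mul_of_ae_fderiv_apply_le (hg : LipschitzWith K g) {y d : E} {r c t : ℝ}
    (hc : ∀ᵐ x ∂μ, x ∈ ball y r → fderiv ℝ g x d ≤ c) (ht : 0 ≤ t) (htr : t * ‖d‖ < r) :
    g (y + t • d) - g y ≤ c * t := by
  have hlim : Tendsto (fun δ => c * t + 2 * K * δ) (𝓝[>] 0) (𝓝 (c * t)) :=
    ((by fun_prop : Continuous fun δ : ℝ => c * t + 2 * K * δ).tendsto' 0 _
      (by simp)).mono_left nhdsWithin_le_nhds
  exact ge_of_tendsto hlim (eventually_of_mem (Ioo_mem_nhdsGT (by linarith))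
    fun δ hδ => hg.sub_le_mul_add_of_ae_fderiv_apply_le hc ht hδ.1 hδ.2)

theorem fderiv_apply_le_of_ae_le (hg : LipschitzWith K g) {y d : E} {r c : ℝ} (hr : 0 < r)
    (hc : ∀ᵐ x ∂μ, x ∈ ball y r → fderiv ℝ g x d ≤ c) (hy : DifferentiableAt ℝ g y) :
    fderiv ℝ g y d ≤ c := by
  have hline : HasDerivAt (fun t : ℝ => g (y + t • d)) (fderiv ℝ g y d) 0 :=
    hy.hasFDerivAt.hasLineDerivAt d
  refine le_of_tendsto ((hasDerivAt_iff_tendsto_slope.1 hline).mono_left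
    (nhdsWithin_mono (0 : ℝ) (s := Ioi 0) fun _ ht => ht.ne')) ?_
  filter_upwards [Ioo_mem_nhdsGT (show 0 < r / (‖d‖ + 1) by positivity)] with t ht
  have htr : t * ‖d‖ < r := by
    nlinarith [(lt_div_iff₀ (by positivity)).1 ht.2, ht.1, norm_nonneg d]
  rw [slope_def_field, div_le_iff₀ (by simpa using ht.1)]
  simpa using hg.sub_le_mul_of_ae_fderiv_apply_le hc ht.1.le htr

end LipschitzWith

theorem LocallyLipschitz.fderiv_apply_le_of_ae_le [NormedSpace ℝ E] [FiniteDimensional ℝ E]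
    {μ : Measure E} [μ.IsAddHaarMeasure] {f : E → ℝ} (hf : LocallyLipschitz f) {U : Set E}
    (hU : IsOpen U) {d : E} {c : ℝ} (hc : ∀ᵐ x ∂μ, x ∈ U → fderiv ℝ f x d ≤ c) {y : E}
    (hyU : y ∈ U) (hy : DifferentiableAt ℝ f y) : fderiv ℝ f y d ≤ c := by
  obtain ⟨K, t, ht, hK⟩ := hf y
  obtain ⟨r, hr, hrt⟩ := Metric.mem_nhds_iff.1 (inter_mem ht (hU.mem_nhds hyU))
  obtain ⟨g, hg, hfg⟩ := (hK.mono (hrt.trans inter_subset_left)).extend_real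
  have hfg_near {x : E} (hx : x ∈ ball y r) : f =ᶠ[𝓝 x] g :=
    eventually_of_mem (isOpen_ball.mem_nhds hx) hfg
  rw [(hfg_near (mem_ball_self hr)).fderiv_eq]
  refine hg.fderiv_apply_le_of_ae_le hr (hc.mono fun x hx hxr => ?_)
    (hy.congr_of_eventuallyEq (hfg_near (mem_ball_self hr)).symm)
  rw [← (hfg_near hxr).fderiv_eq]
  exact hx (hrt hxr).2

end Mollification

theorem clarke_subset_cl_conv_grad_general {n : ℕ} (f : EuclideanSpace ℝ (Fin n) → ℝ)
    (hf : LocallyLipschitz f) (D : Set (EuclideanSpace ℝ (Fin n)))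
    (hD : volume Dᶜ = 0) :
    ∀ (x : EuclideanSpace ℝ (Fin n)) (ε : ℝ), 0 < ε →
      clarkeSubdiff f x ⊆
        closure (convexHull ℝ (gradient f '' (Metric.closedBall x ε ∩ D))) := by
  intro x ε hε
  have hconv := (convex_convexHull ℝ (gradient f '' (closedBall x ε ∩ D))).closure
  refine convexHull_min ?_ hconv
  rintro v ⟨y, hyx, hyd, hv⟩
  by_contra hvC
  obtain ⟨ℓ, u, hℓu, huv⟩ := geometric_hahn_banach_closed_point hconv isClosed_closure hvC
  set d := (InnerProductSpace.toDual ℝ (EuclideanSpace ℝ (Fin n))).symm ℓ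
  have hℓ (z : EuclideanSpace ℝ (Fin n)) : ℓ (gradient f z) = fderiv ℝ f z d := by
    rw [← InnerProductSpace.toDual_symm_apply, real_inner_comm]
    exact InnerProductSpace.toDual_symm_apply
  have hD_le : ∀ᵐ z ∂volume, z ∈ ball x ε → fderiv ℝ f z d ≤ u := by
    filter_upwards [mem_ae_iff.2 hD] with z hzD hzx
    rw [← hℓ]
    exact (hℓu _ (subset_closure (subset_convexHull ℝ _
      (mem_image_of_mem _ ⟨ball_subset_closedBall hzx, hzD⟩)))).le
  have hle : ∀ᶠ j in atTop, ℓ (gradient f (y j)) ≤ u := by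
    filter_upwards [hyx.eventually (isOpen_ball.mem_nhds (mem_ball_self hε))] with j hj
    rw [hℓ]
    exact hf.fderiv_apply_le_of_ae_le isOpen_ball hD_le hj (hyd j)
  linarith [le_of_tendsto ((ℓ.continuous.tendsto v).comp hv) hle]

theorem clarke_subset_cl_conv_grad {n : ℕ} (f : EuclideanSpace ℝ (Fin n) → ℝ)
    (hf : LocallyLipschitz f) (D : Set (EuclideanSpace ℝ (Fin n)))
    (hD : volume Dᶜ = 0) (hdiff : ∀ y ∈ D, DifferentiableAt ℝ f y) :
    ∀ (x : EuclideanSpace ℝ (Fin n)) (ε : ℝ), 0 < ε →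
      clarkeSubdiff f x ⊆
        closure (convexHull ℝ (gradient f '' (Metric.closedBall x ε ∩ D))) :=
  clarke_subset_cl_conv_grad_general f hf D hD
end

section
/- For every δ ∈ (0,1) there exists a Lipschitz function f : (0,1) → ℝ, an open dense set D ⊆ (0,1) on which f is continuously differentiable with f'(q) = 1 for all q ∈ D, and a point z ∈ (0,1) \ D and ε > 0 such that f'(z) exists and equals 0, while the closed convex hull of f'((z-ε, z+ε) ∩ D) equals {1}; hence the Clarke subdifferential ∂̄f(z) (which contains 0) is not contained in cl conv f'(B(z,ε) ∩ D). -/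
/-!
Let `D ⊆ (0, 1)` be an open set containing the rationals of `(0, 1)` with `λ(D) < 1` (outer
regularity, as countable sets are null) and `f x = λ(D ∩ (-∞, x])`. Then `f` is `1`-Lipschitz with
`f' = 1` on `D`. As `(0, 1) \ D` has positive measure, Lebesgue's density theorem gives a point `z`
there at which `D` has density `0`; since `|f x - f z| ≤ λ(D ∩ B(z, |x - z|))`, this forces
`f'(z) = 0`. Hence `0 ∈ ∂̄f(z)`, whereas every derivative sampled on `D` equals `1`.
-/

open Filter MeasureTheory

/-- The Clarke subdifferential of `f : ℝ → ℝ` at `x`: the convex hull of all limits of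
derivatives along sequences of differentiability points converging to `x`. -/
noncomputable def clarkeSubdiffReal (f : ℝ → ℝ) (x : ℝ) : Set ℝ :=
  convexHull ℝ { v | ∃ y : ℕ → ℝ,
    Tendsto y atTop (nhds x) ∧ (∀ j, DifferentiableAt ℝ f (y j)) ∧
    Tendsto (fun j => deriv f (y j)) atTop (nhds v) }

open Set Topology Metric
open scoped ENNReal

theorem exists_isOpen_subset_subset_closure_measure_lt {X : Type*} [TopologicalSpace X]
    [TopologicalSpace.SeparableSpace X] [MeasurableSpace X] (μ : Measure X) [μ.OuterRegular]
    [NullSingletonClass μ] {t : Set X} (ht : IsOpen t) {r : ℝ≥0∞} (hr : 0 < r) :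
    ∃ D ⊆ t, IsOpen D ∧ t ⊆ closure D ∧ μ D < r := by
  obtain ⟨c, hc, hdense⟩ := TopologicalSpace.exists_countable_dense X
  obtain ⟨U, hcU, hU, hμU⟩ := exists_isOpen_lt_of_lt c r (by rwa [hc.measure_zero μ])
  exact ⟨t ∩ U, inter_subset_left, ht.inter hU, (hdense.mono hcU).open_subset_closure_inter ht,
    (measure_mono inter_subset_right).trans_lt hμU⟩

/-- For `s ⊆ (0, 1)` this is the paper's `x ↦ ∫_{[0,x]} 1_s dλ`. -/
noncomputable def volumeCDF (s : Set ℝ) (x : ℝ) : ℝ := volume.real (s ∩ Iic x)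

section volumeCDF

variable {s : Set ℝ}

theorem volumeCDF_sub (hs : volume s ≠ ⊤) {x y : ℝ} (hyx : y ≤ x) :
    volumeCDF s x - volumeCDF s y = volume.real (s ∩ Ioc y x) := by
  have hfin : volume (s ∩ Iic x) ≠ ⊤ := measure_ne_top_of_subset inter_subset_left hs
  have hleft : s ∩ Iic x ∩ Iic y = s ∩ Iic y := by
    rw [inter_assoc, Iic_inter_Iic, min_eq_right hyx]
  have hright : (s ∩ Iic x) \ Iic y = s ∩ Ioc y x := by
    ext t
    simp only [Set.mem_sdiff, mem_inter_iff, mem_Iic, mem_Ioc, not_le]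
    tauto
  rw [volumeCDF, volumeCDF, ← measureReal_inter_add_sdiff measurableSet_Iic hfin, hleft, hright]
  ring

theorem monotone_volumeCDF (hs : volume s ≠ ⊤) : Monotone (volumeCDF s) := fun _ _ h =>
  measureReal_mono (inter_subset_inter_right _ (Iic_subset_Iic.2 h))
    (measure_ne_top_of_subset inter_subset_left hs)

theorem volumeCDF_sub_le (hs : volume s ≠ ⊤) {x y : ℝ} (hyx : y ≤ x) :
    volumeCDF s x - volumeCDF s y ≤ x - y := by
  rw [volumeCDF_sub hs hyx, ← Real.volume_real_Ioc_of_le hyx]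
  exact measureReal_mono inter_subset_right measure_Ioc_lt_top.ne

theorem lipschitzWith_volumeCDF (hs : volume s ≠ ⊤) : LipschitzWith 1 (volumeCDF s) :=
  LipschitzWith.of_le_add fun x y => by
    rcases le_total y x with h | h
    · linarith [volumeCDF_sub_le hs h, Real.dist_eq x y, le_abs_self (x - y)]
    · linarith [monotone_volumeCDF hs h, dist_nonneg (x := x) (y := y)]

theorem volumeCDF_sub_of_Ioc_subset (hs : volume s ≠ ⊤) {x y : ℝ} (hyx : y ≤ x)
    (h : Ioc y x ⊆ s) : volumeCDF s x - volumeCDF s y = x - y := by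
  rw [volumeCDF_sub hs hyx, inter_eq_right.2 h, Real.volume_real_Ioc_of_le hyx]

theorem hasDerivAt_volumeCDF_of_mem_nhds (hs : volume s ≠ ⊤) {q : ℝ} (hq : s ∈ 𝓝 q) :
    HasDerivAt (volumeCDF s) 1 q := by
  obtain ⟨l, u, hqlu, hlu⟩ := mem_nhds_iff_exists_Ioo_subset.1 hq
  have hline : HasDerivAt (fun x => volumeCDF s q + (x - q)) 1 q := by
    simpa using ((hasDerivAt_id q).sub_const q).const_add (volumeCDF s q)
  refine hline.congr_of_eventuallyEq ?_
  filter_upwards [Ioo_mem_nhds hqlu.1 hqlu.2] with x hx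
  rcases le_total q x with h | h
  · have := volumeCDF_sub_of_Ioc_subset hs h
      (Ioc_subset_Icc_self.trans ((Icc_subset_Ioo hqlu.1 hx.2).trans hlu))
    linarith
  · have := volumeCDF_sub_of_Ioc_subset hs h
      (Ioc_subset_Icc_self.trans ((Icc_subset_Ioo hx.1 hqlu.2).trans hlu))
    linarith

theorem abs_volumeCDF_sub_le (hs : volume s ≠ ⊤) (x z : ℝ) :
    |volumeCDF s x - volumeCDF s z| ≤ volume.real (s ∩ closedBall z |x - z|) := by
  have hball : uIcc x z ⊆ closedBall z |x - z| := fun t ht =>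
    mem_closedBall.2 ((Real.dist_right_le_of_mem_uIcc ht).trans_eq (Real.dist_eq x z))
  have hmono {a b : ℝ} (hab : Icc a b ⊆ uIcc x z) :
      volume.real (s ∩ Ioc a b) ≤ volume.real (s ∩ closedBall z |x - z|) :=
    measureReal_mono (inter_subset_inter_right _ (Ioc_subset_Icc_self.trans (hab.trans hball)))
      (measure_ne_top_of_subset inter_subset_left hs)
  rcases le_total z x with h | h
  · rw [abs_of_nonneg (sub_nonneg.2 (monotone_volumeCDF hs h)), volumeCDF_sub hs h]
    exact hmono Icc_subset_uIcc'
  · rw [abs_of_nonpos (sub_nonpos.2 (monotone_volumeCDF hs h)), neg_sub, volumeCDF_sub hs h]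
    exact hmono Icc_subset_uIcc

theorem hasDerivAt_volumeCDF_of_tendsto (hs : volume s ≠ ⊤) {z : ℝ}
    (hz : Tendsto (fun r => volume.real (s ∩ closedBall z r) / r) (𝓝[>] 0) (𝓝 0)) :
    HasDerivAt (volumeCDF s) 0 z := by
  have hdist : Tendsto (fun x => |x - z|) (𝓝[≠] z) (𝓝[>] 0) := by
    refine tendsto_nhdsWithin_iff.2 ⟨?_, eventually_nhdsWithin_of_forall fun x hx =>
      abs_pos.2 (sub_ne_zero.2 hx)⟩
    exact ((continuous_abs.comp (continuous_sub_right z)).tendsto' z 0 (by simp)).mono_left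
      nhdsWithin_le_nhds
  rw [hasDerivAt_iff_tendsto_slope]
  refine squeeze_zero_norm' (Eventually.of_forall fun x => ?_) (hz.comp hdist)
  rw [slope_def_field, norm_div, Real.norm_eq_abs, Real.norm_eq_abs]
  exact div_le_div_of_nonneg_right (abs_volumeCDF_sub_le hs x z) (abs_nonneg _)

end volumeCDF

theorem exists_mem_sdiff_tendsto_measureReal_inter_closedBall_div {s t : Set ℝ}
    (hs : MeasurableSet s) (ht : volume (t \ s) ≠ 0) :
    ∃ z ∈ t \ s, Tendsto (fun r => volume.real (s ∩ closedBall z r) / r) (𝓝[>] 0) (𝓝 0) := by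
  obtain ⟨z, hz, hdensity⟩ := Measure.exists_mem_of_measure_ne_zero_of_ae ht
    (ae_restrict_of_ae (Besicovitch.ae_tendsto_measure_inter_div_of_measurableSet volume hs))
  refine ⟨z, hz, ?_⟩
  rw [indicator_of_notMem hz.2] at hdensity
  -- the factor `2` absorbs `volume (closedBall z r) = 2 * r`
  have hreal := ((ENNReal.tendsto_toReal ENNReal.zero_ne_top).comp hdensity).const_mul 2
  rw [ENNReal.toReal_zero, mul_zero] at hreal
  refine hreal.congr' (eventually_nhdsWithin_of_forall fun r (hr : 0 < r) => ?_)
  rw [Function.comp_apply, ENNReal.toReal_div, Real.volume_closedBall,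
    ENNReal.toReal_ofReal (by positivity), ← measureReal_def]
  field_simp

theorem mem_clarkeSubdiffReal_of_hasDerivAt {f : ℝ → ℝ} {x f' : ℝ} (h : HasDerivAt f f' x) :
    f' ∈ clarkeSubdiffReal f x :=
  subset_convexHull ℝ _
    ⟨fun _ => x, tendsto_const_nhds, fun _ => h.differentiableAt, by simp [h.deriv]⟩

theorem closure_convexHull_deriv_image_eq_singleton {f : ℝ → ℝ} {A D : Set ℝ} {c : ℝ}
    (hD : ∀ q ∈ D, HasDerivAt f c q) (hne : (A ∩ D).Nonempty) :
    closure (convexHull ℝ (deriv f '' (A ∩ D))) = {c} := by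
  rw [(hne.image _).subset_singleton_iff.1 (image_subset_iff.2 fun q hq => (hD q hq.2).deriv),
    convexHull_singleton, closure_singleton]

theorem counterexample_dense_not_full_measure_general :
    ∃ (f : ℝ → ℝ) (D : Set ℝ) (z ε : ℝ),
      LipschitzOnWith 1 f (Set.Ioo (0:ℝ) 1) ∧
      IsOpen D ∧ D ⊆ Set.Ioo (0:ℝ) 1 ∧ Set.Ioo (0:ℝ) 1 ⊆ closure D ∧
      (∀ q ∈ D, HasDerivAt f 1 q) ∧
      z ∈ Set.Ioo (0:ℝ) 1 \ D ∧ 0 < ε ∧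
      HasDerivAt f 0 z ∧
      closure (convexHull ℝ (deriv f '' (Set.Ioo (z - ε) (z + ε) ∩ D))) = {1} ∧
      (0 : ℝ) ∈ clarkeSubdiffReal f z ∧
      ¬ clarkeSubdiffReal f z ⊆
          closure (convexHull ℝ (deriv f '' (Metric.closedBall z ε ∩ D))) := by
  obtain ⟨D, hD01, hDopen, hDdense, hDvol⟩ :=
    exists_isOpen_subset_subset_closure_measure_lt volume (isOpen_Ioo (a := (0 : ℝ)) (b := 1)) (zero_lt_one' ℝ≥0∞)
  have hDfin : volume D ≠ ⊤ := hDvol.ne_top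
  have hgap : volume (Ioo (0 : ℝ) 1 \ D) ≠ 0 :=
    ((tsub_pos_of_lt (by simpa using hDvol)).trans_le (le_measure_sdiff (μ := volume))).ne'
  obtain ⟨z, hz, hdensity⟩ :=
    exists_mem_sdiff_tendsto_measureReal_inter_closedBall_div hDopen.measurableSet hgap
  have hderiv_one : ∀ q ∈ D, HasDerivAt (volumeCDF D) 1 q := fun q hq =>
    hasDerivAt_volumeCDF_of_mem_nhds hDfin (hDopen.mem_nhds hq)
  have hderiv_zero := hasDerivAt_volumeCDF_of_tendsto hDfin hdensity
  have hne : (Ioo (z - 1) (z + 1) ∩ D).Nonempty :=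
    mem_closure_iff_nhds.1 (hDdense hz.1) _ (Ioo_mem_nhds (by linarith) (by linarith))
  have hball : closure (convexHull ℝ (deriv (volumeCDF D) '' (closedBall z 1 ∩ D))) = {1} :=
    closure_convexHull_deriv_image_eq_singleton hderiv_one <| hne.mono <|
      inter_subset_inter_left _ (Real.closedBall_eq_Icc ▸ Ioo_subset_Icc_self)
  refine ⟨volumeCDF D, D, z, 1, (lipschitzWith_volumeCDF hDfin).lipschitzOnWith, hDopen, hD01,
    hDdense, hderiv_one, hz, one_pos, hderiv_zero,
    closure_convexHull_deriv_image_eq_singleton hderiv_one hne,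
    mem_clarkeSubdiffReal_of_hasDerivAt hderiv_zero, fun hsub => ?_⟩
  have h0 := hsub (mem_clarkeSubdiffReal_of_hasDerivAt hderiv_zero)
  rw [hball] at h0
  norm_num at h0

theorem counterexample_dense_not_full_measure (δ : ℝ) (hδ : δ ∈ Set.Ioo (0:ℝ) 1) :
    ∃ (f : ℝ → ℝ) (D : Set ℝ) (z ε : ℝ),
      LipschitzOnWith 1 f (Set.Ioo (0:ℝ) 1) ∧
      IsOpen D ∧ D ⊆ Set.Ioo (0:ℝ) 1 ∧ Set.Ioo (0:ℝ) 1 ⊆ closure D ∧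
      (∀ q ∈ D, HasDerivAt f 1 q) ∧
      z ∈ Set.Ioo (0:ℝ) 1 \ D ∧ 0 < ε ∧
      HasDerivAt f 0 z ∧
      closure (convexHull ℝ (deriv f '' (Set.Ioo (z - ε) (z + ε) ∩ D))) = {1} ∧
      (0 : ℝ) ∈ clarkeSubdiffReal f z ∧
      ¬ clarkeSubdiffReal f z ⊆
          closure (convexHull ℝ (deriv f '' (Metric.closedBall z ε ∩ D))) :=
  counterexample_dense_not_full_measure_general
end

section
/- Let g₀, …, g_m ∈ ℝⁿ and G = conv{g₀,…,g_m}, and let g* be the minimum-norm element of G with d* = -g*. Then (z*, d*) with z* = -‖g*‖₂² solves min_{(z,d)} z + ½‖d‖₂² subject to ⟨gᵢ, d⟩ ≤ z for all i, and the optimal value of this problem is -½‖g*‖₂². -/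
open RealInnerProductSpace

theorem primal_qp_solution {n m : ℕ} (g : Fin (m + 1) → EuclideanSpace ℝ (Fin n))
    (gs : EuclideanSpace ℝ (Fin n)) (hgs : gs ∈ convexHull ℝ (Set.range g))
    (hmin : ∀ h ∈ convexHull ℝ (Set.range g), ‖gs‖ ≤ ‖h‖) :
    (∀ i, ⟪g i, -gs⟫ ≤ -‖gs‖ ^ 2) ∧
    (∀ (z : ℝ) (d : EuclideanSpace ℝ (Fin n)), (∀ i, ⟪g i, d⟫ ≤ z) →
      -‖gs‖ ^ 2 + (1/2) * ‖-gs‖ ^ 2 ≤ z + (1/2) * ‖d‖ ^ 2) ∧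
    -‖gs‖ ^ 2 + (1/2) * ‖-gs‖ ^ 2 = -(1/2) * ‖gs‖ ^ 2 := by
  set K := convexHull ℝ (Set.range g) with hKdef
  have hK : Convex ℝ K := convex_convexHull _ _
  have hne : Nonempty K := ⟨⟨gs, hgs⟩⟩
  have hinf : ‖(0 : EuclideanSpace ℝ (Fin n)) - gs‖ =
      ⨅ w : K, ‖(0 : EuclideanSpace ℝ (Fin n)) - (w : EuclideanSpace ℝ (Fin n))‖ := by
    apply le_antisymm
    · exact le_ciInf fun w => by simpa using hmin w w.2
    · have hb : BddBelow (Set.range fun w : K =>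
          ‖(0 : EuclideanSpace ℝ (Fin n)) - (w : EuclideanSpace ℝ (Fin n))‖) :=
        ⟨0, by rintro x ⟨w, rfl⟩; positivity⟩
      simpa using ciInf_le hb (⟨gs, hgs⟩ : K)
  have hvar := (norm_eq_iInf_iff_real_inner_le_zero hK hgs).mp hinf
  have key : ∀ h ∈ K, ‖gs‖ ^ 2 ≤ ⟪gs, h⟫ := by
    intro h hh
    have := hvar h hh
    rw [zero_sub, inner_neg_left, inner_sub_right] at this
    have h2 : ⟪gs, gs⟫ ≤ ⟪gs, h⟫ := by linarith
    rwa [real_inner_self_eq_norm_sq] at h2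
  refine ⟨fun i => ?_, fun z d hz => ?_, by rw [norm_neg]; ring⟩
  · have := key (g i) (subset_convexHull ℝ _ ⟨i, rfl⟩)
    rw [inner_neg_right, real_inner_comm]
    linarith
  · have hlin : IsLinearMap ℝ (fun x : EuclideanSpace ℝ (Fin n) => ⟪x, d⟫) :=
      ⟨fun x y => inner_add_left x y d, fun c x => real_inner_smul_left x d c⟩
    have hsub : K ⊆ {x | ⟪x, d⟫ ≤ z} :=
      convexHull_min (by rintro x ⟨i, rfl⟩; exact hz i) (convex_halfSpace_le hlin z)
    have hgd : ⟪gs, d⟫ ≤ z := hsub hgs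
    have hsq : ‖gs + d‖ ^ 2 = ‖gs‖ ^ 2 + 2 * ⟪gs, d⟫ + ‖d‖ ^ 2 := norm_add_sq_real gs d
    have h0 : (0:ℝ) ≤ ‖gs + d‖ ^ 2 := sq_nonneg _
    rw [norm_neg]
    nlinarith
end

section
/- Let f : ℝⁿ → ℝ be locally Lipschitz and let D be a full-measure set of differentiability points of f. For 0 ≤ ε₁ < ε₂ and any x ∈ ℝⁿ, the Clarke ε₁-subdifferential ∂̄_{ε₁} f(x) is contained in G_{ε₂}(x) := cl conv ∇f(B(x, ε₂) ∩ D). -/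
open Filter MeasureTheory

noncomputable def clarkeEpsSubdiff {n : ℕ} (f : EuclideanSpace ℝ (Fin n) → ℝ) (ε : ℝ)
    (x : EuclideanSpace ℝ (Fin n)) : Set (EuclideanSpace ℝ (Fin n)) :=
  convexHull ℝ (⋃ y ∈ Metric.closedBall x ε, clarkeSubdiff f y)

/-!
It suffices that `∇f p ∈ cl conv ∇f (B(p, δ) ∩ D)` whenever `f` is differentiable at `p` and
`δ > 0`: limits of gradients at points close to `y ∈ B(x, ε₁)` then lie in the closed convex set
`cl conv ∇f (B(x, ε₂) ∩ D)`, and so do their convex hulls. If `∇f p` were outside, a separating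
direction `w` would give `⟪∇f z, w⟫ < c < ⟪∇f p, w⟫` for all `z ∈ B(p, δ) ∩ D`. Since `Dᶜ` is
null, by Fubini almost every line `q + ℝ w` meets `Dᶜ` in a null set only, so on such lines the
Lipschitz function `t ↦ f (q + t w)` has derivative `≤ c` almost everywhere and hence increments
`≤ c t`. These lines come arbitrarily close to `p`, so by continuity the increment bound holds at
`p` as well, contradicting `⟪∇f p, w⟫ > c`.
-/

open Set Metric Topology

theorem LipschitzOnWith.sub_le_mul_of_ae_deriv_le {g : ℝ → ℝ} {K : NNReal} {a b c : ℝ}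
    (hab : a ≤ b) (hg : LipschitzOnWith K g (Icc a b))
    (hd : ∀ᵐ t, t ∈ Ioo a b → deriv g t ≤ c) :
    g b - g a ≤ c * (b - a) := by
  have hac : AbsolutelyContinuousOnInterval g a b :=
    LipschitzOnWith.absolutelyContinuousOnInterval (by rwa [uIcc_of_le hab])
  calc g b - g a = ∫ t in a..b, deriv g t := hac.integral_deriv_eq_sub.symm
    _ ≤ ∫ _ in a..b, c := by
      refine intervalIntegral.integral_mono_ae_restrict hab hac.intervalIntegrable_deriv
        intervalIntegrable_const ?_
      rwa [Measure.restrict_congr_set Ioo_ae_eq_Icc.symm, EventuallyLE,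
        ae_restrict_iff' measurableSet_Ioo]
    _ = c * (b - a) := by simp [mul_comm]

section NormedSpace

variable {E : Type*} [NormedAddCommGroup E] [NormedSpace ℝ E]

theorem DifferentiableAt.hasDerivAt_comp_add_smul {f : E → ℝ} {q w : E} {t : ℝ}
    (hf : DifferentiableAt ℝ f (q + t • w)) :
    HasDerivAt (fun s : ℝ => f (q + s • w)) (fderiv ℝ f (q + t • w) w) t := by
  have hline : HasDerivAt (fun s : ℝ => q + s • w) w t := by
    simpa using ((hasDerivAt_id t).smul_const w).const_add q
  exact hf.hasFDerivAt.comp_hasDerivAt t hline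

theorem LipschitzOnWith.sub_le_mul_of_ae_fderiv_le {f : E → ℝ} {K : NNReal} {s : Set E}
    (hf : LipschitzOnWith K f s) {q w : E} {t c : ℝ} (ht : 0 ≤ t)
    (hs : ∀ τ ∈ Icc 0 t, q + τ • w ∈ s)
    (hder : ∀ᵐ τ, τ ∈ Ioo 0 t →
      DifferentiableAt ℝ f (q + τ • w) ∧ fderiv ℝ f (q + τ • w) w ≤ c) :
    f (q + t • w) - f q ≤ c * t := by
  obtain ⟨C, hline⟩ : ∃ C, LipschitzWith C (fun τ : ℝ => q + τ • w) :=
    ⟨_, (LipschitzWith.const q).add (ContinuousLinearMap.smulRight (1 : ℝ →L[ℝ] ℝ) w).lipschitz⟩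
  have := (hf.comp hline.lipschitzOnWith hs).sub_le_mul_of_ae_deriv_le (c := c) ht ?_
  · simpa using this
  filter_upwards [hder] with τ hτ hmem
  obtain ⟨hdiff, hle⟩ := hτ hmem
  rwa [Function.comp_def, hdiff.hasDerivAt_comp_add_smul.deriv]

theorem DifferentiableAt.fderiv_apply_le_of_eventually_sub_le {f : E → ℝ} {p w : E} {c : ℝ}
    (hp : DifferentiableAt ℝ f p) (h : ∀ᶠ t in 𝓝[>] 0, f (p + t • w) - f p ≤ c * t) :
    fderiv ℝ f p w ≤ c := by
  have hslope := (DifferentiableAt.hasDerivAt_comp_add_smul (q := p) (w := w) (t := 0)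
    (by simpa using hp)).tendsto_slope_zero_right
  simp only [zero_add, zero_smul, add_zero] at hslope
  refine le_of_tendsto hslope ?_
  filter_upwards [h, self_mem_nhdsWithin] with t ht (ht0 : 0 < t)
  rw [smul_eq_mul, inv_mul_le_iff₀ ht0, mul_comm]
  exact ht

theorem add_smul_mem_ball_of_mul_norm_lt {p q w : E} {ρ τ t : ℝ} (hq : q ∈ ball p (ρ / 2))
    (hτ : τ ∈ Icc 0 t) (ht : t * ‖w‖ < ρ / 2) : q + τ • w ∈ ball p ρ := by
  rw [mem_ball, dist_eq_norm, add_sub_right_comm] at *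
  calc ‖q - p + τ • w‖ ≤ ‖q - p‖ + τ * ‖w‖ := by
        grw [norm_add_le, norm_smul, Real.norm_of_nonneg hτ.1]
    _ < ρ / 2 + ρ / 2 := by
        gcongr
        exact (mul_le_mul_of_nonneg_right hτ.2 (norm_nonneg w)).trans_lt ht
    _ = ρ := add_halves ρ

variable [FiniteDimensional ℝ E] [MeasurableSpace E] [BorelSpace E]
  {μ : Measure E} [μ.IsAddHaarMeasure]

theorem ae_ae_add_smul {P : E → Prop} (hP : ∀ᵐ z ∂μ, P z) (w : E) :
    ∀ᵐ q ∂μ, ∀ᵐ t : ℝ, P (q + t • w) := by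
  obtain ⟨S, hSP, hSm, hS⟩ := exists_measurable_superset_of_null hP
  let L : ℝ →ₗ[ℝ] E := LinearMap.smulRight LinearMap.id w
  filter_upwards [(ae_ae_add_linearMap_mem_iff L volume μ hSm.compl).2
    (compl_mem_ae_iff.2 hS)] with q hq
  filter_upwards [hq] with t ht
  by_contra h
  exact ht (hSP h)

theorem LipschitzOnWith.fderiv_apply_le_of_ae_fderiv_apply_le {f : E → ℝ} {K : NNReal}
    {U : Set E} {p w : E} {c : ℝ} (hf : LipschitzOnWith K f U) (hU : U ∈ 𝓝 p)
    (hder : ∀ᵐ z ∂μ, z ∈ U → DifferentiableAt ℝ f z ∧ fderiv ℝ f z w ≤ c)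
    (hp : DifferentiableAt ℝ f p) :
    fderiv ℝ f p w ≤ c := by
  obtain ⟨ρ, hρ, hball⟩ := Metric.mem_nhds_iff.1 hU
  have hsmall : ∀ᶠ t in 𝓝[>] (0 : ℝ), t * ‖w‖ < ρ / 2 :=
    nhdsWithin_le_nhds (((continuous_mul_const ‖w‖).tendsto' 0 0 (zero_mul _)).eventually
      (gt_mem_nhds (half_pos hρ)))
  refine hp.fderiv_apply_le_of_eventually_sub_le ?_
  filter_upwards [hsmall, self_mem_nhdsWithin] with t ht (ht0 : 0 < t)
  have hmaps : ∀ q ∈ ball p (ρ / 2), ∀ τ ∈ Icc 0 t, q + τ • w ∈ U :=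
    fun q hq τ hτ => hball (add_smul_mem_ball_of_mul_norm_lt hq hτ ht)
  have hgood : ∀ q ∈ ball p (ρ / 2),
      (∀ᵐ τ : ℝ, q + τ • w ∈ U → DifferentiableAt ℝ f (q + τ • w) ∧
        fderiv ℝ f (q + τ • w) w ≤ c) → f (q + t • w) - f q ≤ c * t := by
    intro q hq hline
    refine hf.sub_le_mul_of_ae_fderiv_le ht0.le (hmaps q hq) ?_
    filter_upwards [hline] with τ hτ hτt
    exact hτ (hmaps q hq τ (Ioo_subset_Icc_self hτt))
  have hfreq : ∃ᶠ q in 𝓝 p, f (q + t • w) - f q ≤ c * t :=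
    ((mem_closure_iff_frequently.1 (Measure.dense_of_ae (ae_ae_add_smul hder w) p)).and_eventually
      (ball_mem_nhds p (half_pos hρ))).mono fun q hq => hgood q hq.2 hq.1
  have hcont : ∀ z ∈ ball p ρ, ContinuousAt f z := fun z hz =>
    hf.continuousOn.continuousAt (mem_of_superset (isOpen_ball.mem_nhds hz) hball)
  have hφ : ContinuousAt (fun q => f (q + t • w) - f q) p := by
    have h₁ := hcont _ (add_smul_mem_ball_of_mul_norm_lt (mem_ball_self (half_pos hρ))
      ⟨ht0.le, le_rfl⟩ ht)
    have h₂ := hcont p (mem_ball_self hρ)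
    fun_prop
  exact isClosed_Iic.mem_of_frequently_of_tendsto hfreq hφ.tendsto

end NormedSpace

theorem gradient_mem_closure_convexHull_gradient_image {E : Type*} [NormedAddCommGroup E]
    [InnerProductSpace ℝ E] [FiniteDimensional ℝ E] [MeasurableSpace E] [BorelSpace E]
    {μ : Measure E} [μ.IsAddHaarMeasure] {f : E → ℝ} (hf : LocallyLipschitz f) {D : Set E}
    (hD : μ Dᶜ = 0) (hdiff : ∀ y ∈ D, DifferentiableAt ℝ f y) {p : E} {δ : ℝ} (hδ : 0 < δ)
    (hp : DifferentiableAt ℝ f p) :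
    gradient f p ∈ closure (convexHull ℝ (gradient f '' (closedBall p δ ∩ D))) := by
  by_contra hmem
  obtain ⟨ψ, c, hlt, hgt⟩ := geometric_hahn_banach_closed_point
    (convex_convexHull ℝ _).closure isClosed_closure hmem
  set w := (InnerProductSpace.toDual ℝ E).symm ψ
  have hψ : ∀ z, ψ (gradient f z) = fderiv ℝ f z w := fun z => by
    rw [← inner_gradient_left, real_inner_comm, InnerProductSpace.toDual_symm_apply]
  obtain ⟨K, U, hU, hfU⟩ := hf p
  have hle : fderiv ℝ f p w ≤ c := by
    refine (hfU.mono inter_subset_left).fderiv_apply_le_of_ae_fderiv_apply_le (μ := μ)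
      (inter_mem hU (closedBall_mem_nhds p hδ)) ?_ hp
    filter_upwards [mem_ae_iff.2 hD] with z hzD hzU
    refine ⟨hdiff z hzD, ?_⟩
    rw [← hψ]
    exact (hlt _ (subset_closure (subset_convexHull ℝ _ ⟨z, ⟨hzU.2, hzD⟩, rfl⟩))).le
  exact (hψ p ▸ hgt).not_ge hle

theorem clarkeSubdiff_subset_closure_convexHull_gradient_image {n : ℕ}
    {f : EuclideanSpace ℝ (Fin n) → ℝ} (hf : LocallyLipschitz f)
    {D : Set (EuclideanSpace ℝ (Fin n))} (hD : volume Dᶜ = 0)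
    (hdiff : ∀ y ∈ D, DifferentiableAt ℝ f y) (y : EuclideanSpace ℝ (Fin n)) {δ : ℝ}
    (hδ : 0 < δ) :
    clarkeSubdiff f y ⊆ closure (convexHull ℝ (gradient f '' (closedBall y δ ∩ D))) := by
  refine convexHull_min ?_ (convex_convexHull ℝ _).closure
  rintro v ⟨ys, hys, hysd, hgrad⟩
  refine isClosed_closure.mem_of_tendsto hgrad ?_
  filter_upwards [hys (closedBall_mem_nhds y (half_pos hδ))] with j hj
  refine closure_mono ?_
    (gradient_mem_closure_convexHull_gradient_image hf hD hdiff (half_pos hδ) (hysd j))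
  gcongr
  exact closedBall_subset_closedBall' (by linarith [mem_closedBall.1 hj])

theorem clarke_eps_subset_cl_conv_grad_general {n : ℕ} (f : EuclideanSpace ℝ (Fin n) → ℝ)
    (hf : LocallyLipschitz f) (D : Set (EuclideanSpace ℝ (Fin n)))
    (hD : volume Dᶜ = 0) (hdiff : ∀ y ∈ D, DifferentiableAt ℝ f y)
    (ε₁ ε₂ : ℝ) (h12 : ε₁ < ε₂) (x : EuclideanSpace ℝ (Fin n)) :
    clarkeEpsSubdiff f ε₁ x ⊆
      closure (convexHull ℝ (gradient f '' (Metric.closedBall x ε₂ ∩ D))) := by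
  refine convexHull_min (iUnion₂_subset fun y hy => ?_) (convex_convexHull ℝ _).closure
  refine (clarkeSubdiff_subset_closure_convexHull_gradient_image hf hD hdiff y
    (sub_pos.2 h12)).trans ?_
  gcongr
  exact closedBall_subset_closedBall' (by linarith [mem_closedBall.1 hy])

theorem clarke_eps_subset_cl_conv_grad {n : ℕ} (f : EuclideanSpace ℝ (Fin n) → ℝ)
    (hf : LocallyLipschitz f) (D : Set (EuclideanSpace ℝ (Fin n)))
    (hD : volume Dᶜ = 0) (hdiff : ∀ y ∈ D, DifferentiableAt ℝ f y)
    (ε₁ ε₂ : ℝ) (h0 : 0 ≤ ε₁) (h12 : ε₁ < ε₂) (x : EuclideanSpace ℝ (Fin n)) :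
    clarkeEpsSubdiff f ε₁ x ⊆
      closure (convexHull ℝ (gradient f '' (Metric.closedBall x ε₂ ∩ D))) :=
  clarke_eps_subset_cl_conv_grad_general f hf D hD hdiff ε₁ ε₂ h12 x
end

section
/- With f(w,z) = max{0.5 w² + 0.1 z, w + 0.1 z + 1, -w + 0.1 z + 1, -0.05 z - 50} and (w₀,z₀) in the closed unit ball centered at (10,10): taking the step x¹ = (w₀,z₀) - 1·(w₀, 0.1), the new point x¹ = (0, z₀ - 0.1) has first coordinate 0, and f is not differentiable at x¹ (since the second and third terms of the max are equal and active there with distinct gradients), while the Armijo condition f(x¹) < f(x⁰) - β‖(w₀,0.1)‖² holds for β = 10⁻⁴. -/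
theorem example_full_step_nondifferentiable
    (f : ℝ × ℝ → ℝ)
    (hf : ∀ p : ℝ × ℝ, f p = max (max (0.5 * p.1 ^ 2 + 0.1 * p.2) (p.1 + 0.1 * p.2 + 1))
        (max (-p.1 + 0.1 * p.2 + 1) (-0.05 * p.2 - 50)))
    (w₀ z₀ : ℝ) (hball : (w₀ - 10) ^ 2 + (z₀ - 10) ^ 2 ≤ 1) :
    ((w₀, z₀) - (1 : ℝ) • ((w₀, 0.1) : ℝ × ℝ)).1 = 0 ∧
    ¬ DifferentiableAt ℝ f ((w₀, z₀) - (1 : ℝ) • ((w₀, 0.1) : ℝ × ℝ)) ∧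
    f ((w₀, z₀) - (1 : ℝ) • ((w₀, 0.1) : ℝ × ℝ)) <
      f (w₀, z₀) - (10 : ℝ) ^ (-(4:ℤ)) * 1 * (w₀ ^ 2 + (0.1 : ℝ) ^ 2) := by
  have hw1 : 9 ≤ w₀ := by nlinarith [sq_nonneg (z₀ - 10)]
  have hw2 : w₀ ≤ 11 := by nlinarith [sq_nonneg (z₀ - 10)]
  have hz1 : 9 ≤ z₀ := by nlinarith [sq_nonneg (w₀ - 10)]
  have hz2 : z₀ ≤ 11 := by nlinarith [sq_nonneg (w₀ - 10)]
  have hx : ((w₀, z₀) - (1 : ℝ) • ((w₀, 0.1) : ℝ × ℝ)) = ((0 : ℝ), z₀ - 0.1) := by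
    simp [Prod.ext_iff]
  rw [hx]
  refine ⟨rfl, ?_, ?_⟩
  · intro hdiff
    have hcurve : DifferentiableAt ℝ (fun w : ℝ => ((w, z₀ - 0.1) : ℝ × ℝ)) 0 := by
      fun_prop
    have h1 : DifferentiableAt ℝ (fun w : ℝ => f (w, z₀ - 0.1)) 0 :=
      hdiff.comp 0 hcurve
    have heq : (fun w : ℝ => f (w, z₀ - 0.1)) =ᶠ[nhds (0:ℝ)]
        (fun w : ℝ => |w| + (0.1 * (z₀ - 0.1) + 1)) := by
      filter_upwards [Metric.ball_mem_nhds (0:ℝ) one_pos] with w hw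
      rw [Metric.mem_ball, Real.dist_eq, sub_zero] at hw
      have habs : |w| < 1 := hw
      have hle : w ≤ 1 := (abs_lt.mp habs).2.le
      have hge : -1 ≤ w := (abs_lt.mp habs).1.le
      rw [hf]
      rcases le_total 0 w with h0 | h0
      · rw [abs_of_nonneg h0]
        exact le_antisymm
          (max_le (max_le (by nlinarith) (by nlinarith))
            (max_le (by nlinarith) (by nlinarith)))
          (le_max_of_le_left (le_max_of_le_right (by linarith)))
      · rw [abs_of_nonpos h0]
        exact le_antisymm
          (max_le (max_le (by nlinarith) (by nlinarith))
            (max_le (by nlinarith) (by nlinarith)))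
          (le_max_of_le_right (le_max_of_le_left (by linarith)))
    have h2 : DifferentiableAt ℝ (fun w : ℝ => |w| + (0.1 * (z₀ - 0.1) + 1)) 0 :=
      h1.congr_of_eventuallyEq heq.symm
    have h3 : DifferentiableAt ℝ (fun w : ℝ => |w|) 0 := by
      simpa using h2.sub_const (0.1 * (z₀ - 0.1) + 1)
    exact not_differentiableAt_abs_zero h3
  · rw [hf, hf]
    simp only
    have e1 : max (max (0.5 * (0:ℝ) ^ 2 + 0.1 * (z₀ - 0.1)) ((0:ℝ) + 0.1 * (z₀ - 0.1) + 1))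
        (max (-(0:ℝ) + 0.1 * (z₀ - 0.1) + 1) (-0.05 * (z₀ - 0.1) - 50))
        = 0.1 * (z₀ - 0.1) + 1 := by
      exact le_antisymm
        (max_le (max_le (by nlinarith) (by nlinarith))
          (max_le (by nlinarith) (by nlinarith)))
        (le_max_of_le_left (le_max_of_le_right (by linarith)))
    have e2 : max (max (0.5 * w₀ ^ 2 + 0.1 * z₀) (w₀ + 0.1 * z₀ + 1))
        (max (-w₀ + 0.1 * z₀ + 1) (-0.05 * z₀ - 50))
        = 0.5 * w₀ ^ 2 + 0.1 * z₀ := by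
      exact le_antisymm
        (max_le (max_le le_rfl (by nlinarith))
          (max_le (by nlinarith) (by nlinarith)))
        (le_max_of_le_left (le_max_of_le_left le_rfl))
    rw [e1, e2]
    norm_num
    nlinarith
end

section
/- Let f : ℝⁿ → ℝ be locally Lipschitz and for ε > 0 define the ball-averaged smoothing f_ε(x) := (1/λ(B(0,ε))) ∫_{B(x,ε)} f dλ. If y is sampled uniformly from B(x,ε) then ∇f(y) exists almost surely and its expectation equals ∇f_ε(x); in particular f_ε is differentiable at every x with ∇f_ε(x) = (1/λ(B(0,ε))) ∫_{B(x,ε)} ∇f dλ. -/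
/-! Up to the factor `c = λ(B(0,ε))⁻¹`, `f_ε(x) = ∫_{B(0,ε)} f(x + y) dy`. Near `x` all translates
`f(· + y)`, `y ∈ B(0,ε)`, are Lipschitz with one constant (`f` is Lipschitz on a compact
neighbourhood of `x + B(0,ε)`), and by Rademacher's theorem they are differentiable at `x` for
almost every `y`. Dominated differentiation under the integral then gives
`Df_ε(x) = c ∫_{B(0,ε)} Df(x + y) dy`, and translating back and passing to gradients through the
Riesz isometry `E ≃ E*` gives the formula. -/

open MeasureTheory Metric Set Filter Topology

theorem toDual_integral_gradient {E : Type*} [NormedAddCommGroup E] [InnerProductSpace ℝ E]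
    [CompleteSpace E] [MeasurableSpace E] (μ : Measure E) (f : E → ℝ) :
    InnerProductSpace.toDual ℝ E (∫ y, gradient f y ∂μ) = ∫ y, fderiv ℝ f y ∂μ :=
  ((InnerProductSpace.toDual ℝ E).toLinearIsometry.integral_comp_comm (gradient f)).symm.trans <|
    integral_congr_ae <| Eventually.of_forall fun _ =>
      (InnerProductSpace.toDual ℝ E).apply_symm_apply _

theorem setIntegral_closedBall_zero_comp_add_left {E G : Type*} [NormedAddCommGroup E]
    [MeasurableSpace E] [BorelSpace E] [NormedAddCommGroup G] [NormedSpace ℝ G] (μ : Measure E)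
    [μ.IsAddLeftInvariant] (g : E → G) (x : E) (r : ℝ) :
    ∫ y in closedBall 0 r, g (x + y) ∂μ = ∫ z in closedBall x r, g z ∂μ := by
  have hpre : (x + ·) ⁻¹' closedBall x r = closedBall 0 r := by
    ext y; simp [dist_eq_norm]
  rw [← hpre]
  exact (measurePreserving_add_left μ x).setIntegral_preimage_emb
    (measurableEmbedding_addLeft x) g _

section LocallyLipschitz

variable {E F : Type*} [NormedAddCommGroup E] [NormedSpace ℝ E] [FiniteDimensional ℝ E]
  [MeasurableSpace E] [BorelSpace E] {μ : Measure E} [μ.IsAddHaarMeasure]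
  [NormedAddCommGroup F] [NormedSpace ℝ F] [FiniteDimensional ℝ F] {f : E → F}

theorem LocallyLipschitz.ae_differentiableAt (hf : LocallyLipschitz f) :
    ∀ᵐ x ∂μ, DifferentiableAt ℝ f x := by
  have hball : ∀ k : ℕ, ∀ᵐ x ∂μ, x ∈ ball (0 : E) k → DifferentiableAt ℝ f x := by
    intro k
    obtain ⟨K, hK⟩ := hf.locallyLipschitzOn.exists_lipschitzOnWith_of_compact
      (isCompact_closedBall (0 : E) k)
    filter_upwards [hK.ae_differentiableWithinAt_of_mem (μ := μ)] with x hx hxk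
    exact (hx (ball_subset_closedBall hxk)).differentiableAt
      (mem_of_superset (isOpen_ball.mem_nhds hxk) ball_subset_closedBall)
  filter_upwards [ae_all_iff.2 hball] with x hx
  obtain ⟨k, hk⟩ := exists_nat_gt ‖x‖
  exact hx k (mem_ball_zero_iff.2 hk)

theorem LocallyLipschitz.hasFDerivAt_setIntegral_comp_add (hf : LocallyLipschitz f) {s : Set E}
    (hs : IsCompact s) (x₀ : E) :
    HasFDerivAt (fun x => ∫ y in s, f (x + y) ∂μ) (∫ y in s, fderiv ℝ f (x₀ + y) ∂μ) x₀ := by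
  obtain ⟨K, hK⟩ := hf.locallyLipschitzOn.exists_lipschitzOnWith_of_compact
    ((isCompact_closedBall x₀ 1).add hs)
  have hcont := hf.continuous
  have hlip : ∀ y ∈ s, LipschitzOnWith K (fun x => f (x + y)) (closedBall x₀ 1) := by
    intro y hy
    refine LipschitzOnWith.of_dist_le_mul fun a ha b hb => ?_
    simpa only [dist_add_right] using
      hK.dist_le_mul (a + y) (add_mem_add ha hy) (b + y) (add_mem_add hb hy)
  have hdiff : ∀ᵐ y ∂μ, DifferentiableAt ℝ f (x₀ + y) :=
    (measurePreserving_add_left μ x₀).quasiMeasurePreserving.ae hf.ae_differentiableAt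
  refine (hasFDerivAt_integral_of_dominated_loc_of_lip (bound := fun _ => (K : ℝ))
    (closedBall_mem_nhds x₀ one_pos) ?_ ?_ ?_ ?_ ?_ ?_).2
  · exact Eventually.of_forall fun x => (hcont.comp (continuous_const_add x)).aestronglyMeasurable
  · exact (hcont.comp (continuous_const_add x₀)).continuousOn.integrableOn_compact hs
  · exact ((measurable_fderiv ℝ f).comp (measurable_const_add x₀)).aestronglyMeasurable
  · refine (ae_restrict_iff' hs.measurableSet).2 (Eventually.of_forall fun y hy => ?_)
    simpa only [Real.nnabs_coe] using hlip y hy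
  · exact integrableOn_const hs.measure_lt_top.ne
  · filter_upwards [ae_restrict_of_ae hdiff] with y hy
    exact (hasFDerivAt_comp_add_right y).2 hy.hasFDerivAt

end LocallyLipschitz

theorem smoothing_gradient_general {n : ℕ} (f : EuclideanSpace ℝ (Fin n) → ℝ)
    (hf : LocallyLipschitz f) (ε : ℝ)
    (fε : EuclideanSpace ℝ (Fin n) → ℝ)
    (hfε : ∀ x, fε x = (volume (Metric.closedBall (0 : EuclideanSpace ℝ (Fin n)) ε)).toReal⁻¹ *
        ∫ y in Metric.closedBall x ε, f y) :
    ∀ x : EuclideanSpace ℝ (Fin n),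
      (∀ᵐ y ∂(volume.restrict (Metric.closedBall x ε)), DifferentiableAt ℝ f y) ∧
      HasGradientAt fε
        ((volume (Metric.closedBall (0 : EuclideanSpace ℝ (Fin n)) ε)).toReal⁻¹ •
          ∫ y in Metric.closedBall x ε, gradient f y) x := by
  intro x
  refine ⟨ae_restrict_of_ae hf.ae_differentiableAt, ?_⟩
  have hder := hf.hasFDerivAt_setIntegral_comp_add (μ := volume) (isCompact_closedBall 0 ε) x
  simp only [setIntegral_closedBall_zero_comp_add_left] at hder
  rw [funext hfε, hasGradientAt_iff_hasFDerivAt, map_smulₛₗ, toDual_integral_gradient]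
  exact hder.const_mul _

theorem smoothing_gradient {n : ℕ} (f : EuclideanSpace ℝ (Fin n) → ℝ)
    (hf : LocallyLipschitz f) (ε : ℝ) (hε : 0 < ε)
    (fε : EuclideanSpace ℝ (Fin n) → ℝ)
    (hfε : ∀ x, fε x = (volume (Metric.closedBall (0 : EuclideanSpace ℝ (Fin n)) ε)).toReal⁻¹ *
        ∫ y in Metric.closedBall x ε, f y) :
    ∀ x : EuclideanSpace ℝ (Fin n),
      (∀ᵐ y ∂(volume.restrict (Metric.closedBall x ε)), DifferentiableAt ℝ f y) ∧
      HasGradientAt fε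
        ((volume (Metric.closedBall (0 : EuclideanSpace ℝ (Fin n)) ε)).toReal⁻¹ •
          ∫ y in Metric.closedBall x ε, gradient f y) x :=
  smoothing_gradient_general f hf ε fε hfε
end
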